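/- Let φ be a spinor on a Spin^c surface satisfying Dφ = Hφ − iτφ̄ with |φ| constant and nonvanishing φ±. Define T^φ_±(X,Y) = Re⟨∇_X φ^±, Y•φ^∓⟩ in an oriented orthonormal frame {t₁,t₂}. Then tr T^φ_± = −Re⟨Dφ^±, φ^∓⟩ = −H|φ^∓|², and T^φ_±(t₁,t₂) = τ|φ^∓|² + T^φ_±(t₂,t₁). -/

import Mathlib

/-!
Clifford multiplication anticommutes with the volume element `ω = i t₁•t₂` while `∇` commutes
with it, so the Dirac operator exchanges the `±1`-eigenspaces of `ω` and the equation
`Dφ = Hφ − iτωφ` splits into `Dφ^± = (H ± iτ)φ^∓`. Skewness of Clifford multiplication turns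
`tr T^φ_±` into `−Re⟨Dφ^±, φ^∓⟩`. On the chiral spinor `φ^∓` one has `t₂•φ^∓ = ∓i t₁•φ^∓`, so
`T^φ_±(t₁,t₂) − T^φ_±(t₂,t₁) = ∓Im⟨Dφ^±, φ^∓⟩ = τ|φ^∓|²`.
-/

open Complex
open scoped InnerProductSpace

section Clifford

variable {V S : Type*} [AddCommGroup V] [Module ℝ V] [AddCommGroup S] [Module ℂ S]
  {g : V →ₗ[ℝ] V →ₗ[ℝ] ℝ} {cl : V →ₗ[ℝ] S →ₗ[ℂ] S}

theorem clifford_mul_self_of_unit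
    (hclif : ∀ (X Y : V) (ψ : S), cl X (cl Y ψ) + cl Y (cl X ψ) = (-2 * g X Y) • ψ)
    {X : V} (hX : g X X = 1) (ψ : S) : cl X (cl X ψ) = -ψ := by
  have h := hclif X X ψ
  rw [hX, ← two_smul ℝ] at h
  exact smul_right_injective S two_ne_zero (h.trans (by module))

theorem clifford_anticomm_of_orthogonal
    (hclif : ∀ (X Y : V) (ψ : S), cl X (cl Y ψ) + cl Y (cl X ψ) = (-2 * g X Y) • ψ)
    {X Y : V} (hXY : g X Y = 0) (ψ : S) : cl Y (cl X ψ) = -cl X (cl Y ψ) := by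
  have h := hclif X Y ψ
  rw [hXY, mul_zero, zero_smul] at h
  exact eq_neg_of_add_eq_zero_right h

end Clifford

section VolumeElement

variable {S : Type*} [AddCommGroup S] [Module ℂ S]

def volumeElement (a b : S →ₗ[ℂ] S) : S →ₗ[ℂ] S := I • a ∘ₗ b

variable {a b : S →ₗ[ℂ] S}

@[simp]
theorem volumeElement_apply (ψ : S) : volumeElement a b ψ = I • a (b ψ) := rfl

theorem volumeElement_volumeElement (ha : ∀ ψ, a (a ψ) = -ψ) (hb : ∀ ψ, b (b ψ) = -ψ)
    (hab : ∀ ψ, b (a ψ) = -a (b ψ)) (ψ : S) : volumeElement a b (volumeElement a b ψ) = ψ := by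
  simp [smul_smul, hab, ha, hb]

theorem anticomm_volumeElement (ha : ∀ ψ, a (a ψ) = -ψ) (hb : ∀ ψ, b (b ψ) = -ψ)
    (hab : ∀ ψ, b (a ψ) = -a (b ψ)) (ψ : S) :
    a (volumeElement a b ψ) = -volumeElement a b (a ψ) ∧
      b (volumeElement a b ψ) = -volumeElement a b (b ψ) := by
  simp [hab, ha, hb]

theorem apply_right_of_volumeElement_eq_smul (ha : ∀ ψ, a (a ψ) = -ψ) {ε : ℝ} {y : S}
    (hy : volumeElement a b y = ε • y) : b y = (ε * I) • a y := by
  have h := congrArg a hy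
  simp only [volumeElement_apply, map_smul, ha, smul_neg, ← Complex.coe_smul] at h
  calc b y = -(I * I) • b y := by simp
    _ = I • (ε : ℂ) • a y := by rw [← h]; module
    _ = (ε * I) • a y := by module

end VolumeElement

section Involution

variable {S : Type*} [AddCommGroup S] [Module ℂ S] {ω : S →ₗ[ℂ] S}

theorem apply_half_add_self (hω : ∀ ψ, ω (ω ψ) = ψ) (φ : S) :
    ω ((1 / 2 : ℝ) • (φ + ω φ)) = (1 / 2 : ℝ) • (φ + ω φ) := by
  rw [LinearMap.map_smul_of_tower, map_add, hω, add_comm]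

theorem apply_half_sub_self (hω : ∀ ψ, ω (ω ψ) = ψ) (φ : S) :
    ω ((1 / 2 : ℝ) • (φ - ω φ)) = -((1 / 2 : ℝ) • (φ - ω φ)) := by
  rw [LinearMap.map_smul_of_tower, map_sub, hω]
  module

end Involution

section Dirac

variable {ι S : Type*} [Fintype ι] [AddCommGroup S] [Module ℂ S]

def dirac (c : ι → S →ₗ[ℂ] S) (nabla : ι → S →ₗ[ℝ] S) : S →ₗ[ℝ] S where
  toFun ψ := ∑ i, c i (nabla i ψ)
  map_add' ψ χ := by simp [Finset.sum_add_distrib]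
  map_smul' r ψ := by simp [Finset.smul_sum, LinearMap.map_smul_of_tower]

variable {c : ι → S →ₗ[ℂ] S} {nabla : ι → S →ₗ[ℝ] S} {ω : S →ₗ[ℂ] S}

@[simp]
theorem dirac_apply (ψ : S) : dirac c nabla ψ = ∑ i, c i (nabla i ψ) := rfl

theorem dirac_anticomm (hc : ∀ i ψ, c i (ω ψ) = -ω (c i ψ))
    (hn : ∀ i ψ, nabla i (ω ψ) = ω (nabla i ψ)) (ψ : S) :
    dirac c nabla (ω ψ) = -ω (dirac c nabla ψ) := by
  simp [hn, hc]

theorem dirac_half_add (hω : ∀ ψ, ω (ω ψ) = ψ)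
    (hD : ∀ ψ, dirac c nabla (ω ψ) = -ω (dirac c nabla ψ)) {φ : S} {H τ : ℝ}
    (hφ : dirac c nabla φ = H • φ - (I * τ) • ω φ) :
    dirac c nabla ((1 / 2 : ℝ) • (φ + ω φ)) = ((H : ℂ) + I * τ) • ((1 / 2 : ℝ) • (φ - ω φ)) := by
  rw [map_smul, map_add, hD, hφ]
  simp only [map_sub, map_smul, hω, ← Complex.coe_smul]
  module

/-- `-ω` is the volume element of the opposite orientation; it exchanges `φ⁺` and `φ⁻`. -/
theorem dirac_half_sub (hω : ∀ ψ, ω (ω ψ) = ψ)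
    (hD : ∀ ψ, dirac c nabla (ω ψ) = -ω (dirac c nabla ψ)) {φ : S} {H τ : ℝ}
    (hφ : dirac c nabla φ = H • φ - (I * τ) • ω φ) :
    dirac c nabla ((1 / 2 : ℝ) • (φ - ω φ)) = ((H : ℂ) - I * τ) • ((1 / 2 : ℝ) • (φ + ω φ)) := by
  have h := dirac_half_add (ω := -ω) (τ := -τ) (by simpa using hω)
    (fun ψ => by rw [LinearMap.neg_apply, map_neg, hD, LinearMap.neg_apply])
    (by simpa using hφ)
  simpa [sub_eq_add_neg] using h

end Dirac

section Skew

variable {S : Type*} [NormedAddCommGroup S] [InnerProductSpace ℂ S]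

theorem re_inner_smul_self_left (z : ℂ) (y : S) : re ⟪z • y, y⟫_ℂ = z.re * ‖y‖ ^ 2 := by
  simp [inner_self_eq_norm_sq_to_K, ← ofReal_pow, mul_comm]

theorem im_inner_smul_self_left (z : ℂ) (y : S) : im ⟪z • y, y⟫_ℂ = -z.im * ‖y‖ ^ 2 := by
  simp [inner_self_eq_norm_sq_to_K, ← ofReal_pow, mul_comm]

theorem sum_re_inner_nabla_clifford {ι : Type*} [Fintype ι] {c : ι → S →ₗ[ℂ] S}
    {nabla : ι → S →ₗ[ℝ] S} (hskew : ∀ i ψ χ, ⟪c i ψ, χ⟫_ℂ = -⟪ψ, c i χ⟫_ℂ) (x y : S) :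
    ∑ i, re ⟪nabla i x, c i y⟫_ℂ = -re ⟪dirac c nabla x, y⟫_ℂ := by
  simp [hskew]

variable {c : Fin 2 → S →ₗ[ℂ] S} {nabla : Fin 2 → S →ₗ[ℝ] S}

theorem re_inner_nabla_clifford_antisymm (hskew : ∀ i ψ χ, ⟪c i ψ, χ⟫_ℂ = -⟪ψ, c i χ⟫_ℂ)
    {ε : ℝ} (hε : ε * ε = 1) {y : S} (hy : c 1 y = (ε * I) • c 0 y) (x : S) :
    re ⟪nabla 0 x, c 1 y⟫_ℂ - re ⟪nabla 1 x, c 0 y⟫_ℂ = ε * im ⟪dirac c nabla x, y⟫_ℂ := by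
  simp only [dirac_apply, Fin.sum_univ_two, inner_add_left, hskew, hy, inner_smul_right]
  simp only [add_im, neg_im, mul_re, mul_im, ofReal_re, ofReal_im, I_re, I_im]
  linear_combination (re ⟪nabla 1 x, c 0 y⟫_ℂ) * hε

theorem chiral_tensor_identities (hskew : ∀ i ψ χ, ⟪c i ψ, χ⟫_ℂ = -⟪ψ, c i χ⟫_ℂ)
    {ε : ℝ} (hε : ε * ε = 1) {x y : S} (hy : c 1 y = (ε * I) • c 0 y) {H τ : ℝ}
    (hx : dirac c nabla x = ((H : ℂ) - ε * τ * I) • y) :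
    ((∑ i, re ⟪nabla i x, c i y⟫_ℂ = -re ⟪dirac c nabla x, y⟫_ℂ ∧
      ∑ i, re ⟪nabla i x, c i y⟫_ℂ = -H * ‖y‖ ^ 2) ∧
    re ⟪nabla 0 x, c 1 y⟫_ℂ = τ * ‖y‖ ^ 2 + re ⟪nabla 1 x, c 0 y⟫_ℂ) := by
  have htrace := sum_re_inner_nabla_clifford (nabla := nabla) hskew x y
  have hanti := re_inner_nabla_clifford_antisymm (nabla := nabla) hskew hε hy x
  have hre : re ⟪dirac c nabla x, y⟫_ℂ = H * ‖y‖ ^ 2 := by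
    rw [hx, re_inner_smul_self_left]; simp
  have him : im ⟪dirac c nabla x, y⟫_ℂ = ε * τ * ‖y‖ ^ 2 := by
    rw [hx, im_inner_smul_self_left]; simp
  refine ⟨⟨htrace, by rw [htrace, hre]; ring⟩, ?_⟩
  linear_combination hanti + ε * him + τ * ‖y‖ ^ 2 * hε

end Skew

theorem stmt_14_general
    {S : Type*} [NormedAddCommGroup S] [InnerProductSpace ℂ S]
    {V : Type*} [AddCommGroup V] [Module ℝ V]
    (g : V →ₗ[ℝ] V →ₗ[ℝ] ℝ)
    (e : Fin 2 → V)
    (horth : ∀ i j, g (e i) (e j) = if i = j then 1 else 0)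
    (cl : V →ₗ[ℝ] S →ₗ[ℂ] S)
    (hclif : ∀ (X Y : V) (ψ : S), cl X (cl Y ψ) + cl Y (cl X ψ) = (-2 * g X Y) • ψ)
    (hskew : ∀ (X : V) (ψ χ : S), (inner ℂ (cl X ψ) χ : ℂ) = -(inner ℂ ψ (cl X χ) : ℂ))
    (nabla : V → S →ₗ[ℝ] S)
    (ω : S →ₗ[ℂ] S)
    (hω : ∀ ψ, ω ψ = Complex.I • cl (e 0) (cl (e 1) ψ))
    (hpar : ∀ (X : V) (ψ : S), nabla X (ω ψ) = ω (nabla X ψ))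
    (φ φp φm : S) (H τ : ℝ)
    (hφp : φp = (1 / 2 : ℝ) • (φ + ω φ))
    (hφm : φm = (1 / 2 : ℝ) • (φ - ω φ))
    (hdirac : (∑ i, cl (e i) (nabla (e i) φ)) = H • φ - (Complex.I * (τ : ℂ)) • ω φ)
    (Tp Tm : V → V → ℝ)
    (hTp : ∀ X Y : V, Tp X Y = (inner ℂ (nabla X φp) (cl Y φm) : ℂ).re)
    (hTm : ∀ X Y : V, Tm X Y = (inner ℂ (nabla X φm) (cl Y φp) : ℂ).re) :
    ((∑ i, Tp (e i) (e i)) = -(inner ℂ (∑ i, cl (e i) (nabla (e i) φp)) φm : ℂ).re ∧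
      (∑ i, Tp (e i) (e i)) = -H * ‖φm‖ ^ 2) ∧
    ((∑ i, Tm (e i) (e i)) = -(inner ℂ (∑ i, cl (e i) (nabla (e i) φm)) φp : ℂ).re ∧
      (∑ i, Tm (e i) (e i)) = -H * ‖φp‖ ^ 2) ∧
    Tp (e 0) (e 1) = τ * ‖φm‖ ^ 2 + Tp (e 1) (e 0) ∧
    Tm (e 0) (e 1) = τ * ‖φp‖ ^ 2 + Tm (e 1) (e 0) := by
  obtain rfl : ω = volumeElement (cl (e 0)) (cl (e 1)) := LinearMap.ext hω
  have hsq (i : Fin 2) := clifford_mul_self_of_unit hclif (X := e i) (by simp [horth])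
  have hanti := clifford_anticomm_of_orthogonal hclif (X := e 0) (Y := e 1) (by simp [horth])
  have hinv := volumeElement_volumeElement (hsq 0) (hsq 1) hanti
  have hD := dirac_anticomm (c := fun i => cl (e i)) (nabla := fun i => nabla (e i))
    (Fin.forall_fin_two.mpr ⟨fun ψ => (anticomm_volumeElement (hsq 0) (hsq 1) hanti ψ).1,
      fun ψ => (anticomm_volumeElement (hsq 0) (hsq 1) hanti ψ).2⟩)
    (fun i => hpar (e i))
  have hDp := dirac_half_add hinv hD hdirac
  have hDm := dirac_half_sub hinv hD hdirac
  rw [← hφp, ← hφm] at hDp hDm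
  have hyp := apply_right_of_volumeElement_eq_smul (ε := 1) (y := φp) (hsq 0)
    (by rw [hφp, apply_half_add_self hinv, one_smul])
  have hym := apply_right_of_volumeElement_eq_smul (ε := -1) (y := φm) (hsq 0)
    (by rw [hφm, apply_half_sub_self hinv, neg_one_smul])
  obtain ⟨trp, offp⟩ := chiral_tensor_identities (H := H) (τ := τ) (fun i => hskew (e i))
    (by norm_num) hym (hDp.trans (by congr 1; push_cast; ring))
  obtain ⟨trm, offm⟩ := chiral_tensor_identities (H := H) (τ := τ) (fun i => hskew (e i))
    (by norm_num) hyp (hDm.trans (by congr 1; push_cast; ring))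
  simp only [hTp, hTm]
  exact ⟨trp, trm, offp, offm⟩

/-- on a Spin^c surface, for a spinor `φ` of constant norm with
`Dφ = Hφ − iτφ̄` and nonvanishing `φ± = (1/2)(φ ± ωφ)` (`ω = i t₁•t₂` the volume
element), the tensors `T^φ_±(X,Y) = Re⟨∇_X φ^±, Y•φ^∓⟩` satisfy
`tr T^φ_± = −Re⟨Dφ^±, φ^∓⟩ = −H|φ^∓|²` and `T^φ_±(t₁,t₂) = τ|φ^∓|² + T^φ_±(t₂,t₁)`. -/
theorem stmt_14
    {S : Type*} [NormedAddCommGroup S] [InnerProductSpace ℂ S]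
    {V : Type*} [AddCommGroup V] [Module ℝ V]
    (g : V →ₗ[ℝ] V →ₗ[ℝ] ℝ)
    (e : Fin 2 → V)
    (horth : ∀ i j, g (e i) (e j) = if i = j then 1 else 0)
    (cl : V →ₗ[ℝ] S →ₗ[ℂ] S)
    (hclif : ∀ (X Y : V) (ψ : S), cl X (cl Y ψ) + cl Y (cl X ψ) = (-2 * g X Y) • ψ)
    (hskew : ∀ (X : V) (ψ χ : S), (inner ℂ (cl X ψ) χ : ℂ) = -(inner ℂ ψ (cl X χ) : ℂ))
    (nabla : V → S →ₗ[ℝ] S)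
    (ω : S →ₗ[ℂ] S)
    (hω : ∀ ψ, ω ψ = Complex.I • cl (e 0) (cl (e 1) ψ))
    (hpar : ∀ (X : V) (ψ : S), nabla X (ω ψ) = ω (nabla X ψ))
    (φ φp φm : S) (H τ : ℝ)
    (hφp : φp = (1 / 2 : ℝ) • (φ + ω φ))
    (hφm : φm = (1 / 2 : ℝ) • (φ - ω φ))
    (hφp0 : φp ≠ 0) (hφm0 : φm ≠ 0)
    (hnorm : ∀ X : V, (inner ℂ (nabla X φ) φ : ℂ).re = 0)
    (hdirac : (∑ i, cl (e i) (nabla (e i) φ)) = H • φ - (Complex.I * (τ : ℂ)) • ω φ)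
    (Tp Tm : V → V → ℝ)
    (hTp : ∀ X Y : V, Tp X Y = (inner ℂ (nabla X φp) (cl Y φm) : ℂ).re)
    (hTm : ∀ X Y : V, Tm X Y = (inner ℂ (nabla X φm) (cl Y φp) : ℂ).re) :
    ((∑ i, Tp (e i) (e i)) = -(inner ℂ (∑ i, cl (e i) (nabla (e i) φp)) φm : ℂ).re ∧
      (∑ i, Tp (e i) (e i)) = -H * ‖φm‖ ^ 2) ∧
    ((∑ i, Tm (e i) (e i)) = -(inner ℂ (∑ i, cl (e i) (nabla (e i) φm)) φp : ℂ).re ∧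
      (∑ i, Tm (e i) (e i)) = -H * ‖φp‖ ^ 2) ∧
    Tp (e 0) (e 1) = τ * ‖φm‖ ^ 2 + Tp (e 1) (e 0) ∧
    Tm (e 0) (e 1) = τ * ‖φp‖ ^ 2 + Tm (e 1) (e 0) :=
  stmt_14_general g e horth cl hclif hskew nabla ω hω hpar φ φp φm H τ hφp hφm hdirac Tp Tm hTp hTm
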